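/- Let a, b, c, d ∈ ℂ satisfy d² = a² + b² + c², and define u : ℝ⁴ → ℂ (with coordinates (t,x,y,z)) as the sum of the eight exponentials exp(a x + σ_b·b y + σ_c·c z + σ_d·d t) over all sign choices σ_b, σ_c, σ_d ∈ {+1,−1}. Then: (1) u satisfies the 3D wave equation ∂²u/∂t² = ∂²u/∂x² + ∂²u/∂y² + ∂²u/∂z² at every point of ℝ⁴; (2) (∂u/∂y)(t,x,0,z) = 0 for all t,x,z ∈ ℝ; and (3) (∂u/∂z)(t,x,y,0) = 0 for all t,x,y ∈ ℝ. -/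

import Mathlib

/-- Partial derivative in the first variable `t`. -/
noncomputable def d1 (u : ℝ × ℝ × ℝ × ℝ → ℂ) : ℝ × ℝ × ℝ × ℝ → ℂ :=
  fun p => deriv (fun s => u (s, p.2.1, p.2.2.1, p.2.2.2)) p.1

/-- Partial derivative in the second variable `x`. -/
noncomputable def d2 (u : ℝ × ℝ × ℝ × ℝ → ℂ) : ℝ × ℝ × ℝ × ℝ → ℂ :=
  fun p => deriv (fun s => u (p.1, s, p.2.2.1, p.2.2.2)) p.2.1

/-- Partial derivative in the third variable `y`. -/
noncomputable def d3 (u : ℝ × ℝ × ℝ × ℝ → ℂ) : ℝ × ℝ × ℝ × ℝ → ℂ :=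
  fun p => deriv (fun s => u (p.1, p.2.1, s, p.2.2.2)) p.2.2.1

/-- Partial derivative in the fourth variable `z`. -/
noncomputable def d4 (u : ℝ × ℝ × ℝ × ℝ → ℂ) : ℝ × ℝ × ℝ × ℝ → ℂ :=
  fun p => deriv (fun s => u (p.1, p.2.1, p.2.2.1, s)) p.2.2.2

/-- B-EPGP basis element for the 3D wave equation: the sum of the eight exponentials
`exp(a x + σ_b b y + σ_c c z + σ_d d t)` over all sign choices `σ_b, σ_c, σ_d ∈ {1,−1}`. -/
noncomputable def wave3DBasis (a b c d : ℂ) : ℝ × ℝ × ℝ × ℝ → ℂ :=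
  fun p => ∑ σb ∈ ({1, -1} : Finset ℂ), ∑ σc ∈ ({1, -1} : Finset ℂ),
    ∑ σd ∈ ({1, -1} : Finset ℂ),
      Complex.exp (a * (p.2.1 : ℂ) + σb * b * (p.2.2.1 : ℂ) + σc * c * (p.2.2.2 : ℂ) +
        σd * d * (p.1 : ℂ))

/-! Summing over the signs pairs each exponential with its reflection, so the basis element
factors as `8 cosh(dt) e^{ax} cosh(by) cosh(cz)`. Each second partial derivative of such a product
multiplies it by the square of the corresponding rate, so the wave equation reduces to
`d² = a² + b² + c²`; the first derivatives in `y` and `z` carry a factor `sinh`, which vanishes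
at `0`. -/

def prod4 (f₁ f₂ f₃ f₄ : ℝ → ℂ) : ℝ × ℝ × ℝ × ℝ → ℂ :=
  fun p => f₁ p.1 * f₂ p.2.1 * f₃ p.2.2.1 * f₄ p.2.2.2

section prod4

variable {f₁ f₂ f₃ f₄ f' : ℝ → ℂ}

lemma d1_prod4 (hf : ∀ s, HasDerivAt f₁ (f' s) s) :
    d1 (prod4 f₁ f₂ f₃ f₄) = prod4 f' f₂ f₃ f₄ :=
  funext fun ⟨t, x, y, z⟩ => ((((hf t).mul_const (f₂ x)).mul_const (f₃ y)).mul_const (f₄ z)).deriv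

lemma d2_prod4 (hf : ∀ s, HasDerivAt f₂ (f' s) s) :
    d2 (prod4 f₁ f₂ f₃ f₄) = prod4 f₁ f' f₃ f₄ :=
  funext fun ⟨t, x, y, z⟩ => ((((hf x).const_mul (f₁ t)).mul_const (f₃ y)).mul_const (f₄ z)).deriv

lemma d3_prod4 (hf : ∀ s, HasDerivAt f₃ (f' s) s) :
    d3 (prod4 f₁ f₂ f₃ f₄) = prod4 f₁ f₂ f' f₄ :=
  funext fun ⟨t, x, y, z⟩ => (((hf y).const_mul (f₁ t * f₂ x)).mul_const (f₄ z)).deriv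

lemma d4_prod4 (hf : ∀ s, HasDerivAt f₄ (f' s) s) :
    d4 (prod4 f₁ f₂ f₃ f₄) = prod4 f₁ f₂ f₃ f' :=
  funext fun ⟨t, x, y, z⟩ => ((hf z).const_mul (f₁ t * f₂ x * f₃ y)).deriv

end prod4

namespace Complex

lemma hasDerivAt_const_mul_ofReal (k : ℂ) (s : ℝ) : HasDerivAt (fun s : ℝ => k * s) k s := by
  simpa using ((hasDerivAt_id (s : ℂ)).const_mul k).comp_ofReal

lemma hasDerivAt_exp_mul_ofReal (k : ℂ) (s : ℝ) :
    HasDerivAt (fun s : ℝ => exp (k * s)) (k * exp (k * s)) s :=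
  ((hasDerivAt_exp _).comp s (hasDerivAt_const_mul_ofReal k s)).congr_deriv (mul_comm _ _)

lemma hasDerivAt_cosh_mul_ofReal (k : ℂ) (s : ℝ) :
    HasDerivAt (fun s : ℝ => cosh (k * s)) (k * sinh (k * s)) s :=
  ((hasDerivAt_cosh _).comp s (hasDerivAt_const_mul_ofReal k s)).congr_deriv (mul_comm _ _)

lemma hasDerivAt_sinh_mul_ofReal (k : ℂ) (s : ℝ) :
    HasDerivAt (fun s : ℝ => sinh (k * s)) (k * cosh (k * s)) s :=
  ((hasDerivAt_sinh _).comp s (hasDerivAt_const_mul_ofReal k s)).congr_deriv (mul_comm _ _)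

end Complex

open Complex

lemma wave3DBasis_eq_prod4 (a b c d : ℂ) :
    wave3DBasis a b c d = prod4 (fun t => 8 * cosh (d * t)) (fun x => exp (a * x))
      (fun y => cosh (b * y)) (fun z => cosh (c * z)) := by
  funext p
  simp only [wave3DBasis, prod4, Finset.sum_pair (show (1 : ℂ) ≠ -1 by norm_num), exp_add,
    one_mul, neg_mul, cosh]
  ring

/-- The eight-term exponential combination satisfies the 3D wave equation and the Neumann
conditions on the planes `{y = 0}` and `{z = 0}` simultaneously and exactly. -/
theorem wave3DBasis_solves_wave_neumann
    (a b c d : ℂ) (h : d ^ 2 = a ^ 2 + b ^ 2 + c ^ 2) :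
    (∀ p : ℝ × ℝ × ℝ × ℝ,
      d1 (d1 (wave3DBasis a b c d)) p =
        d2 (d2 (wave3DBasis a b c d)) p + d3 (d3 (wave3DBasis a b c d)) p +
          d4 (d4 (wave3DBasis a b c d)) p) ∧
    (∀ t x z : ℝ, d3 (wave3DBasis a b c d) (t, x, 0, z) = 0) ∧
    (∀ t x y : ℝ, d4 (wave3DBasis a b c d) (t, x, y, 0) = 0) := by
  have ht : ∀ s : ℝ, HasDerivAt (fun t : ℝ => 8 * cosh (d * t)) (8 * (d * sinh (d * s))) s :=
    fun s => (hasDerivAt_cosh_mul_ofReal d s).const_mul 8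
  have htt : ∀ s : ℝ, HasDerivAt (fun t : ℝ => 8 * (d * sinh (d * t)))
      (8 * (d * (d * cosh (d * s)))) s :=
    fun s => ((hasDerivAt_sinh_mul_ofReal d s).const_mul d).const_mul 8
  have hy : ∀ s : ℝ, HasDerivAt (fun y : ℝ => b * sinh (b * y)) (b * (b * cosh (b * s))) s :=
    fun s => (hasDerivAt_sinh_mul_ofReal b s).const_mul b
  have hz : ∀ s : ℝ, HasDerivAt (fun z : ℝ => c * sinh (c * z)) (c * (c * cosh (c * s))) s :=
    fun s => (hasDerivAt_sinh_mul_ofReal c s).const_mul c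
  rw [wave3DBasis_eq_prod4]
  refine ⟨fun p => ?_, fun t x z => ?_, fun t x y => ?_⟩
  · rw [d1_prod4 ht, d1_prod4 htt, d2_prod4 (hasDerivAt_exp_mul_ofReal a),
      d2_prod4 (fun s => (hasDerivAt_exp_mul_ofReal a s).const_mul a),
      d3_prod4 (hasDerivAt_cosh_mul_ofReal b), d3_prod4 hy,
      d4_prod4 (hasDerivAt_cosh_mul_ofReal c), d4_prod4 hz]
    simp only [prod4]
    linear_combination 8 * cosh (d * p.1) * exp (a * p.2.1) * cosh (b * p.2.2.1) *
      cosh (c * p.2.2.2) * h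
  · simp [d3_prod4 (hasDerivAt_cosh_mul_ofReal b), prod4]
  · simp [d4_prod4 (hasDerivAt_cosh_mul_ofReal c), prod4]
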